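/- (MFPT error bound.) Let μ and μ̃ be probability measures on M with μ(P) > 0 and μ̃(P) > 0, let τ_M^x and τ̃_M^x be nonnegative quantities (exact and numerically discretized local first passage times) with E^μ[τ_M] := ∫ μ(dx) E^x[τ_M^x] and similarly for μ̃ and τ̃. Suppose the Milestoning equation E^ρ[τ_P] = μ(P)^{−1} E^μ[τ_M] holds. Then with φ(δt) := |E^{μ̃}[τ_M] − E^{μ̃}[τ̃_M]|, c_1 := E^μ[τ_M], and c_2 := sup_{x∈M} E^x[τ_M^x], one has | E^ρ[τ_P] − μ̃(P)^{−1} E^{μ̃}[τ̃_M] | ≤ c_1 |μ(P)^{−1} − μ̃(P)^{−1}| + μ̃(P)^{−1} ( c_2 ‖μ − μ̃‖_TV + φ(δt) ). -/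
import Mathlib


open MeasureTheory ProbabilityTheory Filter Set

/-- Total variation norm of a difference of measures,
`‖μ − ν‖_TV = sup_{|f| ≤ 1} |∫ f dμ − ∫ f dν|`. -/
noncomputable def tvDist {M : Type*} [MeasurableSpace M] (μ ν : Measure M) : ℝ :=
  ⨆ f : {f : M → ℝ // Measurable f ∧ ∀ x, |f x| ≤ 1},
    |∫ x, f.1 x ∂μ - ∫ x, f.1 x ∂ν|

lemma le_tvDist {M : Type*} [MeasurableSpace M] (μ ν : Measure M)
    [IsProbabilityMeasure μ] [IsProbabilityMeasure ν]
    (f : M → ℝ) (hm : Measurable f) (hb : ∀ x, |f x| ≤ 1) :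
    |∫ x, f x ∂μ - ∫ x, f x ∂ν| ≤ tvDist μ ν := by
  have hbdd : BddAbove (Set.range fun f : {f : M → ℝ // Measurable f ∧ ∀ x, |f x| ≤ 1} =>
      |∫ x, f.1 x ∂μ - ∫ x, f.1 x ∂ν|) := by
    refine ⟨2, ?_⟩
    rintro _ ⟨f, rfl⟩
    have h1 : ‖∫ x, f.1 x ∂μ‖ ≤ 1 := by
      have := norm_integral_le_of_norm_le_const (μ := μ) (f := f.1) (C := 1)
        (Filter.Eventually.of_forall fun x => by simpa using f.2.2 x)
      simpa using this
    have h2 : ‖∫ x, f.1 x ∂ν‖ ≤ 1 := by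
      have := norm_integral_le_of_norm_le_const (μ := ν) (f := f.1) (C := 1)
        (Filter.Eventually.of_forall fun x => by simpa using f.2.2 x)
      simpa using this
    calc |∫ x, f.1 x ∂μ - ∫ x, f.1 x ∂ν| ≤ ‖∫ x, f.1 x ∂μ‖ + ‖∫ x, f.1 x ∂ν‖ :=
      abs_sub _ _
    _ ≤ 2 := by linarith
  exact le_ciSup hbdd ⟨f, hm, hb⟩

lemma integral_diff_le_tvDist {M : Type*} [MeasurableSpace M] (μ ν : Measure M)
    [IsProbabilityMeasure μ] [IsProbabilityMeasure ν]
    (g : M → ℝ) (hm : Measurable g) (h0 : ∀ x, 0 ≤ g x)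
    (hb : BddAbove (Set.range g)) :
    |∫ x, g x ∂μ - ∫ x, g x ∂ν| ≤ (⨆ x, g x) * tvDist μ ν := by
  by_cases hM : Nonempty M
  · set c := ⨆ x, g x with hc
    have hgc : ∀ x, g x ≤ c := fun x => le_ciSup hb x
    rcases eq_or_lt_of_le (le_trans (h0 hM.some) (hgc hM.some)) with h | hcpos
    · have hg0 : ∀ x, g x = 0 := fun x => le_antisymm (by rw [← h] at hgc; exact hgc x) (h0 x)
      simp only [hg0, integral_zero, sub_zero, abs_zero, ← h, zero_mul, le_refl]
    · set f : M → ℝ := fun x => g x / c with hf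
      have hfb : ∀ x, |f x| ≤ 1 := by
        intro x
        rw [abs_of_nonneg (div_nonneg (h0 x) hcpos.le)]
        exact div_le_one_of_le₀ (hgc x) hcpos.le
      have h1 : |∫ x, f x ∂μ - ∫ x, f x ∂ν| ≤ tvDist μ ν :=
        le_tvDist μ ν f (hm.div_const c) hfb
      have hμ : ∫ x, f x ∂μ = (∫ x, g x ∂μ) / c := integral_div c g
      have hν : ∫ x, f x ∂ν = (∫ x, g x ∂ν) / c := integral_div c g
      rw [hμ, hν, div_sub_div_same, abs_div, abs_of_pos hcpos, div_le_iff₀ hcpos] at h1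
      linarith [h1]
  · have : IsEmpty M := not_nonempty_iff.mp hM
    simp [integral_of_isEmpty, Real.iSup_of_isEmpty]

/-- **MFPT error bound.**  Let `μ, μ̃` be probability measures with `μ(P) > 0`,
`μ̃(P) > 0`, and let `g x = E^x[τ_M^x]` and `g̃ x = E^x[τ̃_M^x]` be the exact and
discretized local mean first passage times, with `E^ν[τ_M] = ∫ g dν` etc.  Suppose the
Milestoning equation `E^ρ[τ_P] = μ(P)⁻¹ E^μ[τ_M]` holds.  Then with
`φ(δt) = |E^μ̃[τ_M] − E^μ̃[τ̃_M]|`, `c₁ = E^μ[τ_M]`, `c₂ = sup_x E^x[τ_M^x]`,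
`|E^ρ[τ_P] − μ̃(P)⁻¹ E^μ̃[τ̃_M]| ≤ c₁|μ(P)⁻¹ − μ̃(P)⁻¹| + μ̃(P)⁻¹(c₂‖μ − μ̃‖_TV + φ(δt))`. -/
theorem MFPT_error_bound
    {M : Type*} [MeasurableSpace M]
    (P : Set M) (hP : MeasurableSet P)
    (μ μt : Measure M) [IsProbabilityMeasure μ] [IsProbabilityMeasure μt]
    (hμP : 0 < (μ P).toReal) (hμtP : 0 < (μt P).toReal)
    (g gt : M → ℝ)
    (hg_meas : Measurable g) (hgt_meas : Measurable gt)
    (hg_nonneg : ∀ x, 0 ≤ g x) (hgt_nonneg : ∀ x, 0 ≤ gt x)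
    (hg_bdd : BddAbove (Set.range g))
    (hg_int : Integrable g μ) (hg_int' : Integrable g μt) (hgt_int : Integrable gt μt)
    (T : ℝ)  -- T = E^ρ[τ_P]
    (hmilestoning : T = (μ P).toReal⁻¹ * ∫ x, g x ∂μ) :
    |T - (μt P).toReal⁻¹ * ∫ x, gt x ∂μt|
      ≤ (∫ x, g x ∂μ) * |(μ P).toReal⁻¹ - (μt P).toReal⁻¹| +
        (μt P).toReal⁻¹ *
          ((⨆ x, g x) * tvDist μ μt + |(∫ x, g x ∂μt) - ∫ x, gt x ∂μt|) := by
  have key := integral_diff_le_tvDist μ μt g hg_meas hg_nonneg hg_bdd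
  set A := ∫ x, g x ∂μ with hA'
  set B := ∫ x, g x ∂μt with hB'
  set C := ∫ x, gt x ∂μt with hC'
  set b := (μ P).toReal
  set a := (μt P).toReal
  have hA : 0 ≤ A := integral_nonneg hg_nonneg
  have ha : 0 ≤ a⁻¹ := inv_nonneg.mpr hμtP.le
  rw [hmilestoning]
  have step1 : |b⁻¹ * A - a⁻¹ * C| ≤ |b⁻¹ * A - a⁻¹ * A| + |a⁻¹ * A - a⁻¹ * C| :=
    abs_sub_le _ _ _
  have e1 : |b⁻¹ * A - a⁻¹ * A| = A * |b⁻¹ - a⁻¹| := by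
    have h : b⁻¹ * A - a⁻¹ * A = A * (b⁻¹ - a⁻¹) := by ring
    rw [h, abs_mul, abs_of_nonneg hA]
  have e2 : |a⁻¹ * A - a⁻¹ * C| = a⁻¹ * |A - C| := by
    rw [← mul_sub, abs_mul, abs_of_nonneg ha]
  have e3 : |A - C| ≤ |A - B| + |B - C| := abs_sub_le _ _ _
  have e4 : a⁻¹ * |A - C| ≤ a⁻¹ * ((⨆ x, g x) * tvDist μ μt + |B - C|) :=
    mul_le_mul_of_nonneg_left (by linarith [key]) ha
  linarith
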